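/- arXiv:1710.03663 — 3 statements merged into one kernel-verified Lean document; each statement's English description precedes it below -/
import Mathlib

section
/- Let B be a connected bipartite D-regular properly edge-colored graph with 2n vertices (colors {1,...,D}), Ω a pairing, and B^Ω the (D+1)-edge-colored graph obtained by adding a color-0 edge between the two vertices of each pair of Ω. Let Φ₀(B^Ω) = Σ_{i=1}^D Φ_{0,i}(B^Ω) be the total number of bicolored cycles using color 0 and color i. Then Φ₀(B^Ω) = 1 + n(D-1) - L_m(B_{/Ω}), where L_m(B_{/Ω}) = L(B_{/Ω}) - Σ_{i=1}^D L(B_{/Ω}^{(i)}) is the number of independent polychromatic cycles of the contracted graph B_{/Ω}. -/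
/-- The number of cycles (orbits) of a permutation. -/
noncomputable def orbitCount {α : Type} (σ : Equiv.Perm α) : ℕ :=
  Nat.card (Quot fun a b : α => σ a = b)

/-- Adjacency in a bubble encoded by color matchings `m i : A ≃ B` between black
vertices `A` and white vertices `B`: the color-`i` edge joins `b` to `m i b`. -/
def bubbleRel {D : ℕ} {A B : Type} (m : Fin D → A ≃ B) (x y : A ⊕ B) : Prop :=
  ∃ (i : Fin D) (v : A), x = Sum.inl v ∧ y = Sum.inr (m i v)

/-- The bubble encoded by `m` is connected. -/
def BubbleConnected {D : ℕ} {A B : Type} (m : Fin D → A ≃ B) : Prop :=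
  ∀ x y : A ⊕ B, Quot.mk (bubbleRel m) x = Quot.mk (bubbleRel m) y

/-- The color-`i` permutation of the contracted graph `B_{/Ω}`: follow the color-`i`
edge from a black vertex and come back through the pair of `Ω`. -/
def colorPerm {D : ℕ} {A B : Type} (m : Fin D → A ≃ B) (Ω : A ≃ B) (i : Fin D) :
    Equiv.Perm A := (m i).trans Ω.symm

/-- Adjacency of the contracted graph `B_{/Ω}` (all colors together). -/
def contrStep {D : ℕ} {A B : Type} (m : Fin D → A ≃ B) (Ω : A ≃ B) (a b : A) : Prop :=
  ∃ i : Fin D, Ω.symm (m i a) = b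

/-- The 0-score `Φ₀(B^Ω)`: total number of bicolored cycles using color 0, i.e. the
total number of cycles of the color permutations of `B_{/Ω}`. -/
noncomputable def Phi0 {D : ℕ} {A B : Type} (m : Fin D → A ≃ B) (Ω : A ≃ B) : ℕ :=
  ∑ i : Fin D, orbitCount (colorPerm m Ω i)

/-- Circuit rank `L(B_{/Ω}) = E - V + K` of (the underlying undirected graph of) the
contracted graph, which has `card A` vertices and `D·card A` edges. -/
noncomputable def contrRank {D : ℕ} {A B : Type} [Fintype A] (m : Fin D → A ≃ B) (Ω : A ≃ B) : ℤ :=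
  (D * Fintype.card A : ℤ) - (Fintype.card A : ℤ) +
    (Nat.card (Quot (contrStep m Ω)) : ℤ)

/-- Circuit rank of the color-`i` subgraph of `B_{/Ω}` (it has `card A` vertices,
`card A` edges, and its components are the orbits of the color-`i` permutation). -/
noncomputable def colorRank {D : ℕ} {A B : Type} [Fintype A] (m : Fin D → A ≃ B) (Ω : A ≃ B)
    (i : Fin D) : ℤ :=
  (Fintype.card A : ℤ) - (Fintype.card A : ℤ) + (orbitCount (colorPerm m Ω i) : ℤ)

/-- Number of independent polychromatic cycles
`L_m(B_{/Ω}) = L(B_{/Ω}) - Σ_i L(B_{/Ω}^{(i)})`. -/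
noncomputable def polyRank {D : ℕ} {A B : Type} [Fintype A] (m : Fin D → A ≃ B) (Ω : A ≃ B) : ℤ :=
  contrRank m Ω - ∑ i : Fin D, colorRank m Ω i


/-!
Every colour-`i` subgraph of `B_{/Ω}` is a disjoint union of cycles, so its circuit rank is
its number of cycles, and these add up to `Φ₀`. Hence `Φ₀ = L(B_{/Ω}) - L_m(B_{/Ω})`, and
`L(B_{/Ω}) = n(D-1) + 1` because contracting the pairs of `Ω` keeps `B` connected.
-/

theorem BubbleConnected.quot_mk_contrStep_eq {D : ℕ} {A B : Type} {m : Fin D → A ≃ B}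
    (h : BubbleConnected m) (Ω : A ≃ B) (a b : A) :
    Quot.mk (contrStep m Ω) a = Quot.mk (contrStep m Ω) b := by
  let contract : A ⊕ B → Quot (contrStep m Ω) :=
    Sum.elim (Quot.mk _) (fun w => Quot.mk _ (Ω.symm w))
  have contract_resp : ∀ x y, bubbleRel m x y → contract x = contract y := by
    rintro x y ⟨i, v, rfl, rfl⟩
    exact Quot.sound ⟨i, rfl⟩
  simpa [contract] using congrArg (Quot.lift contract contract_resp) (h (.inl a) (.inl b))

theorem BubbleConnected.card_quot_contrStep {D : ℕ} {A B : Type} [Nonempty A]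
    {m : Fin D → A ≃ B} (h : BubbleConnected m) (Ω : A ≃ B) :
    Nat.card (Quot (contrStep m Ω)) = 1 :=
  Nat.card_eq_one_iff_unique.mpr
    ⟨⟨Quot.ind fun a => Quot.ind fun b => h.quot_mk_contrStep_eq Ω a b⟩,
      ⟨Quot.mk _ (Classical.arbitrary A)⟩⟩

theorem BubbleConnected.contrRank_eq {D : ℕ} {A B : Type} [Fintype A] [Nonempty A]
    {m : Fin D → A ≃ B} (h : BubbleConnected m) (Ω : A ≃ B) :
    contrRank m Ω = (Fintype.card A : ℤ) * ((D : ℤ) - 1) + 1 := by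
  rw [contrRank, h.card_quot_contrStep Ω]
  push_cast
  ring

theorem sum_colorRank {D : ℕ} {A B : Type} [Fintype A] (m : Fin D → A ≃ B) (Ω : A ≃ B) :
    ∑ i, colorRank m Ω i = Phi0 m Ω := by
  simp [colorRank, Phi0]

theorem Phi0_eq_contrRank_sub_polyRank {D : ℕ} {A B : Type} [Fintype A]
    (m : Fin D → A ≃ B) (Ω : A ≃ B) :
    (Phi0 m Ω : ℤ) = contrRank m Ω - polyRank m Ω := by
  rw [polyRank, sum_colorRank]
  ring

theorem phi0_eq_of_pairing_general (D n : ℕ) (hn : 0 < n) (Black White : Type)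
    [Fintype Black]
    (m : Fin D → Black ≃ White) (hconn : BubbleConnected m)
    (hB : Fintype.card Black = n)
    (Ω : Black ≃ White) :
    (Phi0 m Ω : ℤ) = 1 + (n : ℤ) * ((D : ℤ) - 1) - polyRank m Ω := by
  have : Nonempty Black := Fintype.card_pos_iff.mp (hB ▸ hn)
  rw [Phi0_eq_contrRank_sub_polyRank, hconn.contrRank_eq Ω, hB]
  ring

/-- For a connected bipartite D-regular properly edge-colored graph B
with 2n vertices and a pairing Ω, the 0-score of the covering B^Ω satisfies
Φ₀(B^Ω) = 1 + n(D-1) - L_m(B_{/Ω}). -/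
theorem phi0_eq_of_pairing (D n : ℕ) (hn : 0 < n) (Black White : Type)
    [Fintype Black] [Fintype White]
    (m : Fin D → Black ≃ White) (hconn : BubbleConnected m)
    (hB : Fintype.card Black = n) (hW : Fintype.card White = n)
    (Ω : Black ≃ White) :
    (Phi0 m Ω : ℤ) = 1 + (n : ℤ) * ((D : ℤ) - 1) - polyRank m Ω :=
  phi0_eq_of_pairing_general D n hn Black White m hconn hB Ω
end

section
/- With the notation above, Φ₀(B^Ω) ≤ 1 + n(D-1) for every pairing Ω of B, with equality if and only if L_m(B_{/Ω}) = 0, i.e., if and only if every cycle of B_{/Ω} is monochromatic. -/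
/-!
Writing `σᵢ` for the color permutations of `B_{/Ω}` and `c(σᵢ)` for their numbers of cycles,
`Φ₀ = ∑ᵢ c(σᵢ)` and `L_m = (Dn - n + 1) - Φ₀` because `B_{/Ω}` is connected, so everything reduces
to `n - 1 ≤ ∑ᵢ (n - c(σᵢ))` for permutations generating a connected graph. Fix a vertex `a₀`.
Every other vertex has a neighbour closer to `a₀`, so for some `i` it is not a vertex closest
to `a₀` in its `σᵢ`-cycle; and since every cycle contains a closest vertex, at most
`n - c(σᵢ)` vertices are of that kind for a given `i`.
-/

open Function

theorem Function.Surjective.card_add_ncard_nonminimal_le {α β γ : Type*} [Finite α]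
    [LinearOrder β] {q : α → γ} (hq : Surjective q) (f : α → β) :
    Nat.card γ + {a | ∃ b, q b = q a ∧ f b < f a}.ncard ≤ Nat.card α := by
  set T := {a | ∃ b, q b = q a ∧ f b < f a}
  have hsurj : Surjective fun a : ↥Tᶜ => q a := by
    intro c
    obtain ⟨b, hb, hmin⟩ := Set.exists_min_image (q ⁻¹' {c}) f (Set.toFinite _) (hq c)
    refine ⟨⟨b, ?_⟩, hb⟩
    rintro ⟨b', hb', hlt⟩
    exact (hmin b' (hb'.trans hb)).not_gt hlt
  calc Nat.card γ + T.ncard ≤ Tᶜ.ncard + T.ncard := by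
        rw [← Nat.card_coe_set_eq]
        gcongr
        exact Nat.card_le_card_of_surjective _ hsurj
    _ = Nat.card α := by rw [Nat.add_comm, Set.ncard_add_ncard_compl]

namespace SimpleGraph

theorem Reachable.exists_adj_dist_lt {V : Type*} {G : SimpleGraph V} {u v : V}
    (h : G.Reachable u v) (hne : u ≠ v) : ∃ w, G.Adj u w ∧ G.dist w v < G.dist u v := by
  obtain ⟨p, hp⟩ := h.exists_walk_length_eq_dist
  cases p with
  | nil => exact absurd rfl hne
  | cons hadj q =>
    rw [Walk.length_cons] at hp
    exact ⟨_, hadj, (dist_le q).trans_lt (by omega)⟩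

theorem reachable_fromRel_of_eqvGen {V : Type*} {r : V → V → Prop} {u v : V}
    (h : Relation.EqvGen r u v) : (fromRel r).Reachable u v := by
  refine (reachable_is_equivalence (G := fromRel r)).eqvGen_iff.mp (h.mono fun a b hab => ?_)
  by_cases hab' : a = b
  · exact hab' ▸ Reachable.refl a
  · exact Adj.reachable ⟨hab', Or.inl hab⟩

end SimpleGraph

theorem Equiv.Perm.sum_orbitCount_add_card_le {ι α : Type} [Fintype ι] [Finite α]
    (σ : ι → Perm α) (hconn : (SimpleGraph.fromRel fun a b => ∃ i, σ i a = b).Connected) :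
    ∑ i, orbitCount (σ i) + Nat.card α ≤ Fintype.card ι * Nat.card α + 1 := by
  set G := SimpleGraph.fromRel fun a b => ∃ i, σ i a = b
  obtain ⟨a₀⟩ := hconn.nonempty
  let r : ι → α → α → Prop := fun i x y => σ i x = y
  let T : ι → Set α := fun i =>
    {a | ∃ b, Quot.mk (r i) b = Quot.mk _ a ∧ G.dist b a₀ < G.dist a a₀}
  have hcover : {a₀}ᶜ ⊆ ⋃ i ∈ Finset.univ, T i := by
    intro a ha
    obtain ⟨b, ⟨-, ⟨i, hi⟩ | ⟨i, hi⟩⟩, hlt⟩ := (hconn a a₀).exists_adj_dist_lt ha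
    · exact Set.mem_biUnion (Finset.mem_univ i) ⟨b, (Quot.sound (r := r i) hi).symm, hlt⟩
    · exact Set.mem_biUnion (Finset.mem_univ i) ⟨b, Quot.sound (r := r i) hi, hlt⟩
  have hT : ∀ i, orbitCount (σ i) + (T i).ncard ≤ Nat.card α := fun i =>
    Quot.mk_surjective.card_add_ncard_nonminimal_le (G.dist · a₀)
  have hcompl : 1 + ({a₀}ᶜ : Set α).ncard = Nat.card α := by
    rw [← Set.ncard_singleton a₀, Set.ncard_add_ncard_compl]
  calc ∑ i, orbitCount (σ i) + Nat.card α
      ≤ ∑ i, orbitCount (σ i) + (1 + ∑ i, (T i).ncard) := by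
        rw [← hcompl]
        gcongr
        exact (Set.ncard_le_ncard hcover).trans (Finset.set_ncard_biUnion_le _ _)
    _ = ∑ i, (orbitCount (σ i) + (T i).ncard) + 1 := by rw [Finset.sum_add_distrib]; ring
    _ ≤ ∑ _i : ι, Nat.card α + 1 := by gcongr with i; exact hT i
    _ = Fintype.card ι * Nat.card α + 1 := by simp

theorem BubbleConnected.subsingleton_quot_contrStep {D : ℕ} {A B : Type} {m : Fin D → A ≃ B}
    (hconn : BubbleConnected m) (Ω : A ≃ B) : Subsingleton (Quot (contrStep m Ω)) := by
  constructor
  rintro ⟨a⟩ ⟨b⟩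
  let f : A ⊕ B → Quot (contrStep m Ω) := Sum.elim (Quot.mk _) fun w => Quot.mk _ (Ω.symm w)
  have hf : ∀ x y, bubbleRel m x y → f x = f y := by
    rintro _ _ ⟨i, v, rfl, rfl⟩
    exact Quot.sound ⟨i, rfl⟩
  exact congrArg (Quot.lift f hf) (hconn (.inl a) (.inl b))

theorem polyRank_eq_contrRank_sub_phi0 {D : ℕ} {A B : Type} [Fintype A] (m : Fin D → A ≃ B)
    (Ω : A ≃ B) : polyRank m Ω = contrRank m Ω - Phi0 m Ω := by
  simp [polyRank, colorRank, Phi0]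

theorem phi0_le_of_pairing_general (D n : ℕ) (hn : 0 < n) (Black White : Type)
    [Fintype Black]
    (m : Fin D → Black ≃ White) (hconn : BubbleConnected m)
    (hB : Fintype.card Black = n) :
    ∀ Ω : Black ≃ White,
      (Phi0 m Ω : ℤ) ≤ 1 + (n : ℤ) * ((D : ℤ) - 1) ∧
      ((Phi0 m Ω : ℤ) = 1 + (n : ℤ) * ((D : ℤ) - 1) ↔ polyRank m Ω = 0) := by
  intro Ω
  have hne : Nonempty Black := Fintype.card_pos_iff.mp (hB ▸ hn)
  have hsub := hconn.subsingleton_quot_contrStep Ω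
  have hK : Nat.card (Quot (contrStep m Ω)) = 1 :=
    Nat.card_eq_one_iff_unique.mpr ⟨hsub, hne.map (Quot.mk _)⟩
  have hG : (SimpleGraph.fromRel fun a b => ∃ i, colorPerm m Ω i a = b).Connected :=
    ⟨fun a b => SimpleGraph.reachable_fromRel_of_eqvGen (Quot.eqvGen_exact (hsub.elim _ _))⟩
  have hsum : (Phi0 m Ω : ℤ) + n ≤ D * n + 1 := by
    have := Equiv.Perm.sum_orbitCount_add_card_le (colorPerm m Ω) hG
    rw [Nat.card_eq_fintype_card, hB, Fintype.card_fin] at this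
    exact_mod_cast this
  have hpoly : polyRank m Ω = D * n - n + 1 - Phi0 m Ω := by
    rw [polyRank_eq_contrRank_sub_phi0, contrRank, hK, hB]
    push_cast
    ring
  rw [hpoly]
  exact ⟨by linarith, fun h => by linarith, fun h => by linarith⟩

/-- For every pairing Ω of a connected bipartite D-regular properly
edge-colored graph with 2n vertices, Φ₀(B^Ω) ≤ 1 + n(D-1), with equality if and only if
L_m(B_{/Ω}) = 0, i.e. every cycle of B_{/Ω} is monochromatic. -/
theorem phi0_le_of_pairing (D n : ℕ) (hn : 0 < n) (Black White : Type)
    [Fintype Black] [Fintype White]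
    (m : Fin D → Black ≃ White) (hconn : BubbleConnected m)
    (hB : Fintype.card Black = n) (hW : Fintype.card White = n) :
    ∀ Ω : Black ≃ White,
      (Phi0 m Ω : ℤ) ≤ 1 + (n : ℤ) * ((D : ℤ) - 1) ∧
      ((Phi0 m Ω : ℤ) = 1 + (n : ℤ) * ((D : ℤ) - 1) ↔ polyRank m Ω = 0) :=
  phi0_le_of_pairing_general D n hn Black White m hconn hB
end

section
/- Let B be a connected bipartite D-regular properly D-edge-colored graph containing an h-pair π (a black vertex and a white vertex joined by exactly h parallel edges) with h > D/2. Then every optimal pairing of B contains π, where a pairing Ω is optimal if it maximizes Φ₀(B^Ω) over all pairings. -/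
open Equiv

namespace Quot

variable {α : Type} {r s : α → α → Prop} {x y : α}

lemma mk_swap_apply [DecidableEq α] (hxy : Quot.mk s x = Quot.mk s y) (z : α) :
    Quot.mk s (swap x y z) = Quot.mk s z := by
  rcases eq_or_ne z x with rfl | hzx
  · rw [swap_apply_left, hxy]
  rcases eq_or_ne z y with rfl | hzy
  · rw [swap_apply_right, hxy]
  rw [swap_apply_of_ne_of_ne hzx hzy]

variable [Finite α]

lemma natCard_le_of_forall_mk_eq (h : ∀ a b, r a b → Quot.mk s a = Quot.mk s b) :
    Nat.card (Quot s) ≤ Nat.card (Quot r) :=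
  Nat.card_le_card_of_surjective (Quot.lift (Quot.mk s) h)
    (Function.Surjective.of_comp (g := Quot.mk r) Quot.mk_surjective)

lemma natCard_lt_of_forall_mk_eq (h : ∀ a b, r a b → Quot.mk s a = Quot.mk s b)
    (hr : Quot.mk r x ≠ Quot.mk r y) (hs : Quot.mk s x = Quot.mk s y) :
    Nat.card (Quot s) < Nat.card (Quot r) := by
  have hsurj : Function.Surjective (Quot.lift (Quot.mk s) h) :=
    Function.Surjective.of_comp (g := Quot.mk r) Quot.mk_surjective
  refine lt_of_not_ge fun hle => hr ?_
  exact (hsurj.bijective_of_nat_card_le hle).injective hs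

lemma natCard_le_natCard_or_edge_add_one (x y : α) :
    Nat.card (Quot r) ≤ Nat.card (Quot fun a b => r a b ∨ a = x ∧ b = y) + 1 := by
  classical
  let merge (a : α) : Quot r := if Quot.mk r a = Quot.mk r y then Quot.mk r x else Quot.mk r a
  have hmerge : ∀ a b, (r a b ∨ a = x ∧ b = y) → merge a = merge b := by
    rintro a b (hab | ⟨rfl, rfl⟩)
    · simp only [merge, Quot.sound hab]
    · simp [merge]
  have hsurj :
      Function.Surjective (Sum.elim (Quot.lift merge hmerge) fun _ : Unit => Quot.mk r y) := by
    refine Quot.ind fun a => ?_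
    by_cases ha : Quot.mk r a = Quot.mk r y
    · exact ⟨Sum.inr (), ha.symm⟩
    · exact ⟨Sum.inl (Quot.mk _ a), if_neg ha⟩
  simpa using Nat.card_le_card_of_surjective _ hsurj

end Quot

namespace Equiv.Perm

variable {α : Type} {x y : α}

lemma quot_mk_apply (σ : Perm α) (a : α) :
    Quot.mk (fun a b => σ a = b) (σ a) = Quot.mk _ a :=
  (Quot.sound (r := fun a b => σ a = b) rfl).symm

lemma quot_mk_ne_of_apply_eq_self (σ : Perm α) (hx : σ x = x) (hxy : x ≠ y) :
    Quot.mk (fun a b => σ a = b) x ≠ Quot.mk _ y := by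
  intro h
  have hresp : ∀ a b, σ a = b → (a = x) = (b = x) := by
    rintro a _ rfl
    conv_rhs => rw [← hx]
    exact propext σ.injective.eq_iff.symm
  exact hxy (cast (congrArg (Quot.lift (· = x) hresp) h) rfl).symm

variable [Finite α] [DecidableEq α]

lemma orbitCount_le_orbitCount_swap_mul_add_one (σ : Perm α) (x y : α) :
    orbitCount σ ≤ orbitCount (swap x y * σ) + 1 := by
  refine (Quot.natCard_le_natCard_or_edge_add_one x y).trans (Nat.add_le_add_right ?_ 1)
  refine Quot.natCard_le_of_forall_mk_eq ?_
  have hedge : Quot.mk (fun a b => σ a = b ∨ a = x ∧ b = y) x = Quot.mk _ y :=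
    Quot.sound (Or.inr ⟨rfl, rfl⟩)
  rintro a _ rfl
  rw [mul_apply, Quot.mk_swap_apply hedge]
  exact Quot.sound (Or.inl rfl)

/-- A transposition of two points of the same cycle splits that cycle. -/
lemma orbitCount_add_one_le_orbitCount_swap_mul (σ : Perm α) (hxy : x ≠ y) (hσ : σ x = y) :
    orbitCount σ + 1 ≤ orbitCount (swap x y * σ) := by
  have hsame : Quot.mk (fun a b => σ a = b) x = Quot.mk _ y := by rw [← hσ, quot_mk_apply]
  refine Quot.natCard_lt_of_forall_mk_eq ?_
    ((swap x y * σ).quot_mk_ne_of_apply_eq_self ?_ hxy) hsame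
  · rintro a _ rfl
    rw [mul_apply, Quot.mk_swap_apply hsame, quot_mk_apply]
  · rw [mul_apply, hσ, swap_apply_right]

end Equiv.Perm

section Switching

variable {D : ℕ} {A B : Type} (m : Fin D → A ≃ B) (Ω : A ≃ B)

lemma colorPerm_swap_trans [DecidableEq A] (x y : A) (i : Fin D) :
    colorPerm m ((swap x y).trans Ω) i = swap x y * colorPerm m Ω i := by
  ext a
  simp [colorPerm, symm_swap]

lemma Phi0_add_two_mul_card_sub_le_Phi0_swap_trans [Finite A] [DecidableEq A] {x y : A}
    (hxy : x ≠ y) :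
    (Phi0 m Ω : ℤ) + 2 * Nat.card {i // colorPerm m Ω i x = y} - D ≤
      Phi0 m ((swap x y).trans Ω) := by
  have hcolor : ∀ i, (orbitCount (colorPerm m Ω i) : ℤ) +
      2 * (if colorPerm m Ω i x = y then 1 else 0) - 1 ≤
        orbitCount (colorPerm m ((swap x y).trans Ω) i) := by
    intro i
    rw [colorPerm_swap_trans]
    split_ifs with h
    · have := (colorPerm m Ω i).orbitCount_add_one_le_orbitCount_swap_mul hxy h
      omega
    · have := (colorPerm m Ω i).orbitCount_le_orbitCount_swap_mul_add_one x y
      omega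
  have hsum := Finset.sum_le_sum fun i (_ : i ∈ Finset.univ) => hcolor i
  simp only [Finset.sum_sub_distrib, Finset.sum_add_distrib, ← Finset.mul_sum,
    Finset.sum_boole, Finset.sum_const, Finset.card_univ, Fintype.card_fin] at hsum
  rw [Nat.card_eq_fintype_card, Fintype.card_subtype]
  simpa [Phi0] using hsum

end Switching

theorem hpair_mem_optimal_pairing_general (D h : ℕ) (hh : D < 2 * h)
    (Black White : Type) [Fintype Black]
    (m : Fin D → Black ≃ White)
    (b₀ : Black) (w₀ : White)
    (hpair : Nat.card {i : Fin D // m i b₀ = w₀} = h)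
    (Ω : Black ≃ White)
    (hopt : ∀ Ω' : Black ≃ White, Phi0 m Ω' ≤ Phi0 m Ω) :
    Ω b₀ = w₀ := by
  classical
  by_contra hne
  have hb₀ : b₀ ≠ Ω.symm w₀ := fun hb => hne (by rw [hb, Equiv.apply_symm_apply])
  have hcolors : Nat.card {i // colorPerm m Ω i b₀ = Ω.symm w₀} = h :=
    hpair ▸ Nat.card_congr (Equiv.subtypeEquivRight fun i => Ω.symm.injective.eq_iff)
  have hgain := Phi0_add_two_mul_card_sub_le_Phi0_swap_trans m Ω hb₀
  have hmax := hopt ((swap b₀ (Ω.symm w₀)).trans Ω)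
  omega

/-- If a connected bipartite D-regular properly edge-colored graph B
contains an h-pair (a black vertex b₀ and a white vertex w₀ joined by exactly h parallel
edges) with h > D/2, then every pairing maximizing the 0-score Φ₀(B^Ω) pairs b₀ with w₀. -/
theorem hpair_mem_optimal_pairing (D h : ℕ) (hh : D < 2 * h)
    (Black White : Type) [Fintype Black] [Fintype White]
    (m : Fin D → Black ≃ White) (hconn : BubbleConnected m)
    (b₀ : Black) (w₀ : White)
    (hpair : Nat.card {i : Fin D // m i b₀ = w₀} = h)
    (Ω : Black ≃ White)
    (hopt : ∀ Ω' : Black ≃ White, Phi0 m Ω' ≤ Phi0 m Ω) :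
    Ω b₀ = w₀ :=
  hpair_mem_optimal_pairing_general D h hh Black White m b₀ w₀ hpair Ω hopt
end
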